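/- Let X and Y be Polish, μ ∈ P(X), ν ∈ P(Y), and c : X × Y → [0,∞) continuous with T_c(μ,ν) < ∞. Let supp μ = ⋃_{i∈I} X_i and supp ν = ⋃_{j∈J} Y_j be decompositions into connected components with I and J at most countable, and assume that every Y_j with ν(Y_j) > 0 consists of a single point. If there exists a non-degenerate optimal transport plan π ∈ C(μ,ν) such that for every i ∈ I with μ(X_i) > 0 the X_i-restricted Kantorovich potentials S_{c_{X_i}}(μ_{X_i}, ν_{X_i}) are almost surely unique, then the Kantorovich potentials S_c(μ,ν) are almost surely unique, i.e., for all f₁, f₂ ∈ S_c(μ,ν) the difference f₁ − f₂ is μ-almost surely constant. -/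

import Mathlib

open MeasureTheory Filter Set Topology
open scoped ENNReal NNReal Manifold

noncomputable section

/-- The topological support of a Borel measure: points all of whose open
neighborhoods have positive measure. -/
def msupport {X : Type*} [TopologicalSpace X] [MeasurableSpace X]
    (μ : Measure X) : Set X :=
  {x | ∀ U : Set X, IsOpen U → x ∈ U → 0 < μ U}

/-- `π` is a coupling (transport plan) between `μ` and `ν`. -/
def IsCoupling {X Y : Type*} [MeasurableSpace X] [MeasurableSpace Y]
    (π : Measure (X × Y)) (μ : Measure X) (ν : Measure Y) : Prop :=
  π.map Prod.fst = μ ∧ π.map Prod.snd = ν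

/-- The optimal transport cost `T_c(μ, ν)`. -/
def transportCost {X Y : Type*} [MeasurableSpace X] [MeasurableSpace Y]
    (c : X → Y → ℝ) (μ : Measure X) (ν : Measure Y) : ℝ≥0∞ :=
  ⨅ (π : Measure (X × Y)) (_ : IsCoupling π μ ν),
    ∫⁻ p, ENNReal.ofReal (c p.1 p.2) ∂π

/-- `π` is an optimal transport plan between `μ` and `ν` for the cost `c`. -/
def IsOptimalPlan {X Y : Type*} [MeasurableSpace X] [MeasurableSpace Y]
    (c : X → Y → ℝ) (μ : Measure X) (ν : Measure Y) (π : Measure (X × Y)) : Prop :=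
  IsCoupling π μ ν ∧
    ∫⁻ p, ENNReal.ofReal (c p.1 p.2) ∂π = transportCost c μ ν

/-- The `c`-transform of a function `f : X → ℝ ∪ {-∞}`, namely
`f^c(y) = inf_x (c(x,y) - f(x))`. -/
def cTransform {X Y : Type*} (c : X → Y → ℝ) (f : X → EReal) : Y → EReal :=
  fun y => ⨅ x, ((c x y : ℝ) : EReal) - f x

/-- The `c`-transform of a function `g : Y → ℝ ∪ {-∞}`, namely
`g^c(x) = inf_y (c(x,y) - g(y))`. -/
def cTransformY {X Y : Type*} (c : X → Y → ℝ) (g : Y → EReal) : X → EReal :=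
  fun x => ⨅ y, ((c x y : ℝ) : EReal) - g y

/-- `f : X → ℝ ∪ {-∞}` is `c`-concave on `X`: it is the `c`-transform of some
`g : Y → ℝ ∪ {-∞}` and is not identically `-∞`. -/
def CConcave {X Y : Type*} (c : X → Y → ℝ) (f : X → EReal) : Prop :=
  (∃ g : Y → EReal, (∀ y, g y ≠ ⊤) ∧ f = cTransformY c g) ∧
    (∀ x, f x ≠ ⊤) ∧ (∃ x, f x ≠ ⊥)

/-- The `c`-subdifferential `∂_c f = {(x,y) | f(x) + f^c(y) = c(x,y)}`. -/
def cSubdiff {X Y : Type*} (c : X → Y → ℝ) (f : X → EReal) : Set (X × Y) :=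
  {p | f p.1 + cTransform c f p.2 = ((c p.1 p.2 : ℝ) : EReal)}

/-- `f` is a (generalized) Kantorovich potential for `(c, μ, ν)`: it is
`c`-concave and satisfies `f ⊕ f^c = c` almost surely with respect to every
optimal transport plan (which, for `T_c(μ,ν) < ∞`, is equivalent to
`∫ (f ⊕ f^c) dπ = T_c(μ,ν)` for every optimal `π`, since `f ⊕ f^c ≤ c`). -/
def IsKantorovichPotential {X Y : Type*} [MeasurableSpace X] [MeasurableSpace Y]
    (c : X → Y → ℝ) (μ : Measure X) (ν : Measure Y) (f : X → EReal) : Prop :=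
  CConcave c f ∧
    ∀ π : Measure (X × Y), IsOptimalPlan c μ ν π →
      ∀ᵐ p ∂π, f p.1 + cTransform c f p.2 = ((c p.1 p.2 : ℝ) : EReal)

/-- The plan `π` induces regularity on `U` with respect to the compact set `K`. -/
def InducesRegularityOn {X Y : Type*} [TopologicalSpace X] [TopologicalSpace Y]
    [MeasurableSpace X] [MeasurableSpace Y]
    (π : Measure (X × Y)) (U : Set X) (K : Set Y) : Prop :=
  IsCompact K ∧
    (Prod.fst '' msupport π) ∩ U = Prod.fst '' (msupport π ∩ (U ×ˢ K))

/-- The plan `π` induces regularity at the point `x ∈ supp μ`: it induces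
regularity on some relatively open neighborhood `U ⊆ supp μ` of `x`. -/
def InducesRegularityAt {X Y : Type*} [TopologicalSpace X] [TopologicalSpace Y]
    [MeasurableSpace X] [MeasurableSpace Y]
    (π : Measure (X × Y)) (μ : Measure X) (x : X) : Prop :=
  ∃ U : Set X, x ∈ U ∧ (∃ V : Set X, IsOpen V ∧ U = V ∩ msupport μ) ∧
    ∃ K : Set Y, InducesRegularityOn π U K

/-- `F` is a decomposition of the set `S` into its connected components. -/
def IsComponentDecomp {X : Type*} [TopologicalSpace X] {ι : Type*}
    (S : Set X) (F : ι → Set X) : Prop :=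
  (⋃ i, F i) = S ∧ Pairwise (fun i j => Disjoint (F i) (F j)) ∧
    ∀ i, ∃ x ∈ S, F i = connectedComponentIn S x

/-- A transport plan `π` is degenerate (with respect to decompositions `F`, `G`
of the supports of `μ` and `ν` into connected components). -/
def IsDegenerate {X Y : Type*} [MeasurableSpace X] [MeasurableSpace Y] {ι κ : Type*}
    (F : ι → Set X) (G : κ → Set Y) (μ : Measure X) (ν : Measure Y)
    (π : Measure (X × Y)) : Prop :=
  ∃ (I' : Set ι) (J' : Set κ),
    0 < (∑' i : I', μ (F i.1)) ∧
    (∑' i : I', μ (F i.1)) = (∑' i : I', ∑' j : J', π (F i.1 ×ˢ G j.1)) ∧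
    (∑' i : I', ∑' j : J', π (F i.1 ×ˢ G j.1)) = (∑' j : J', ν (G j.1)) ∧
    (∑' j : J', ν (G j.1)) < 1

end

/-!
On every component `X_i` of positive mass, the restrictions of `f₁` and `f₂` are Kantorovich
potentials of the `X_i`-restricted problem: an optimal plan of the restricted problem, glued into
`π` in place of `π|_{X_i × Y}`, is optimal for the full problem. By hypothesis `f₁ = f₂ + a_i`
almost everywhere on `X_i`. If `π` charges `X_i × {y}` for an atom `y` of `ν`, evaluating
`f ⊕ f^c = c` at a common point of `X_i × {y}` for `f₁` and `f₂` gives `a_i = f₂^c(y) - f₁^c(y)`,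
so components that send mass to the same atom share their constant. If the constants were not
all equal, the components carrying the constant `a_{i₀}` and the atoms they charge would form a
degenerate block of `π`.
-/

open Function

lemma IsClosed.connectedComponentIn {X : Type*} [TopologicalSpace X] {s : Set X}
    (hs : IsClosed s) (x : X) : IsClosed (connectedComponentIn s x) := by
  by_cases hx : x ∈ s
  · rw [connectedComponentIn_eq_image hx]
    exact hs.isClosedEmbedding_subtypeVal.isClosedMap _ isClosed_connectedComponent
  · rw [connectedComponentIn_eq_empty hx]
    exact isClosed_empty

lemma msupport_eq_support {X : Type*} [TopologicalSpace X] [MeasurableSpace X]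
    (μ : Measure X) : msupport μ = μ.support := by
  rw [Measure.support_eq_forall_isOpen]
  ext x
  exact forall_congr' fun _ => forall_comm

namespace IsComponentDecomp

variable {X ι : Type*} [TopologicalSpace X] {S : Set X} {F : ι → Set X}

lemma isClosed (hF : IsComponentDecomp S F) (hS : IsClosed S) (i : ι) : IsClosed (F i) := by
  obtain ⟨x, -, hx⟩ := hF.2.2 i
  exact hx ▸ hS.connectedComponentIn x

lemma measurableSet [MeasurableSpace X] [OpensMeasurableSpace X] {μ : Measure X}
    (hF : IsComponentDecomp (msupport μ) F) (i : ι) : MeasurableSet (F i) :=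
  (hF.isClosed (msupport_eq_support μ ▸ Measure.isClosed_support) i).measurableSet

lemma measure_compl_iUnion [MeasurableSpace X] [HereditarilyLindelofSpace X] {μ : Measure X}
    (hF : IsComponentDecomp (msupport μ) F) : μ (⋃ i, F i)ᶜ = 0 := by
  rw [hF.1, msupport_eq_support]
  exact Measure.measure_compl_support

end IsComponentDecomp

namespace IsCoupling

variable {X Y : Type*} [MeasurableSpace X] [MeasurableSpace Y]
  {π : Measure (X × Y)} {μ : Measure X} {ν : Measure Y}

lemma measure_prod_univ (h : IsCoupling π μ ν) {s : Set X} (hs : MeasurableSet s) :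
    π (s ×ˢ univ) = μ s := by
  rw [← h.1, Measure.map_apply measurable_fst hs, ← prod_univ]

lemma measure_univ_prod (h : IsCoupling π μ ν) {t : Set Y} (ht : MeasurableSet t) :
    π (univ ×ˢ t) = ν t := by
  rw [← h.2, Measure.map_apply measurable_snd ht, ← univ_prod]

lemma measure_prod_le_left (h : IsCoupling π μ ν) {s : Set X} (hs : MeasurableSet s)
    (t : Set Y) : π (s ×ˢ t) ≤ μ s :=
  h.measure_prod_univ hs ▸ measure_mono (prod_mono subset_rfl (subset_univ t))

lemma measure_prod_le_right (h : IsCoupling π μ ν) (s : Set X) {t : Set Y}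
    (ht : MeasurableSet t) : π (s ×ˢ t) ≤ ν t :=
  h.measure_univ_prod ht ▸ measure_mono (prod_mono (subset_univ s) subset_rfl)

lemma ae_fst (h : IsCoupling π μ ν) {P : X → Prop} (hP : ∀ᵐ x ∂μ, P x) :
    ∀ᵐ p ∂π, P p.1 :=
  ae_of_ae_map measurable_fst.aemeasurable (h.1 ▸ hP)

end IsCoupling

lemma EReal.exists_coe_of_add_eq_coe {u v : EReal} {r : ℝ} (h : u + v = r) :
    ∃ a b : ℝ, u = a ∧ v = b := by
  induction u using EReal.rec <;> induction v using EReal.rec <;> simp_all [← EReal.coe_add]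

lemma EReal.eq_sub_of_add_eq_coe {u₁ u₂ v₁ v₂ t : EReal} {r : ℝ}
    (h₁ : u₁ + v₁ = r) (h₂ : u₂ + v₂ = r) (ht : u₁ = u₂ + t) : t = v₂ - v₁ := by
  obtain ⟨a₁, b₁, rfl, rfl⟩ := EReal.exists_coe_of_add_eq_coe h₁
  obtain ⟨a₂, b₂, rfl, rfl⟩ := EReal.exists_coe_of_add_eq_coe h₂
  obtain ⟨-, s, -, rfl⟩ := EReal.exists_coe_of_add_eq_coe ht.symm
  rw [← EReal.coe_add] at h₁ h₂ ht
  rw [← EReal.coe_sub, EReal.coe_eq_coe_iff]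
  norm_cast at h₁ h₂ ht
  linarith

lemma transportCost_le {X Y : Type*} [MeasurableSpace X] [MeasurableSpace Y]
    {c : X → Y → ℝ} {μ : Measure X} {ν : Measure Y} {π : Measure (X × Y)}
    (h : IsCoupling π μ ν) : transportCost c μ ν ≤ ∫⁻ p, ENNReal.ofReal (c p.1 p.2) ∂π :=
  iInf₂_le π h

lemma cTransform_le_cTransform_subtype {X Y : Type*} (c : X → Y → ℝ) (f : X → EReal)
    (S : Set X) (y : Y) :
    cTransform c f y ≤ cTransform (fun (x : S) y => c x y) (fun x => f x) y :=
  le_iInf fun x => iInf_le _ (x : X)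

lemma add_cTransform_subtype_eq {X Y : Type*} {c : X → Y → ℝ} {f : X → EReal} {S : Set X}
    {x : S} {y : Y} (h : f x + cTransform c f y = c x y) :
    f x + cTransform (fun (x : S) y => c x y) (fun x => f x) y = c x y := by
  obtain ⟨a, -, ha, -⟩ := EReal.exists_coe_of_add_eq_coe h
  refine le_antisymm ?_ (h ▸ add_le_add le_rfl (cTransform_le_cTransform_subtype c f S y))
  calc f x + cTransform (fun (x : S) y => c x y) (fun x => f x) y
      ≤ f x + ((c x y : ℝ) - f x) := add_le_add le_rfl (iInf_le _ x)
    _ = c x y := by rw [ha, ← EReal.coe_sub, ← EReal.coe_add, add_sub_cancel]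

section Restriction

variable {X Y : Type*} [MeasurableSpace X] [MeasurableSpace Y]
  {μ : Measure X} {ν : Measure Y} {π : Measure (X × Y)} {S : Set X}

abbrev inclProd (S : Set X) (Y : Type*) : S × Y → X × Y := Prod.map Subtype.val id

lemma measurableEmbedding_inclProd (hS : MeasurableSet S) :
    MeasurableEmbedding (inclProd S Y) :=
  (MeasurableEmbedding.subtype_coe hS).prodMap MeasurableEmbedding.id

lemma map_inclProd_comap (hS : MeasurableSet S) (π : Measure (X × Y)) :
    (π.comap (inclProd S Y)).map (inclProd S Y) =
      π.restrict (S ×ˢ univ) := by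
  rw [(measurableEmbedding_inclProd hS).map_comap, range_prodMap, Subtype.range_coe,
    range_id]

lemma map_fst_comap_inclProd (hS : MeasurableSet S) (hπ : π.map Prod.fst = μ) :
    (π.comap (inclProd S Y)).map Prod.fst = μ.comap Subtype.val := by
  have hval := MeasurableEmbedding.subtype_coe hS
  have he := measurableEmbedding_inclProd (Y := Y) hS
  calc (π.comap (inclProd S Y)).map Prod.fst
      = (((π.comap (inclProd S Y)).map Prod.fst).map Subtype.val).comap
          Subtype.val := (hval.comap_map _).symm
    _ = (((π.comap (inclProd S Y)).map (inclProd S Y)).map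
          Prod.fst).comap Subtype.val := by
        rw [Measure.map_map hval.measurable measurable_fst,
          Measure.map_map measurable_fst he.measurable]
        rfl
    _ = (μ.restrict S).comap Subtype.val := by
        rw [map_inclProd_comap hS, prod_univ, ← Measure.restrict_map measurable_fst hS, hπ]
    _ = μ.comap Subtype.val := by rw [← map_comap_subtype_coe hS, hval.comap_map]

lemma map_snd_comap_inclProd (hS : MeasurableSet S) :
    (π.comap (inclProd S Y)).map Prod.snd =
      (π.restrict (S ×ˢ univ)).map Prod.snd := by
  rw [← map_inclProd_comap hS,
    Measure.map_map measurable_snd (measurableEmbedding_inclProd hS).measurable]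
  rfl

lemma isCoupling_smul_comap_inclProd (hS : MeasurableSet S) (h : IsCoupling π μ ν) :
    IsCoupling ((μ S)⁻¹ • π.comap (inclProd S Y)) ((μ S)⁻¹ • μ.comap Subtype.val)
      ((μ S)⁻¹ • (π.restrict (S ×ˢ univ)).map Prod.snd) :=
  ⟨by rw [Measure.map_smul, map_fst_comap_inclProd hS h.1],
    by rw [Measure.map_smul, map_snd_comap_inclProd hS]⟩

lemma isCoupling_glue (hS : MeasurableSet S) (hm0 : μ S ≠ 0) (hm : μ S ≠ ∞)
    (h : IsCoupling π μ ν) {π' : Measure (S × Y)}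
    (h' : IsCoupling π' ((μ S)⁻¹ • μ.comap Subtype.val)
      ((μ S)⁻¹ • (π.restrict (S ×ˢ univ)).map Prod.snd)) :
    IsCoupling (π.restrict (S ×ˢ univ)ᶜ + μ S • π'.map (inclProd S Y)) μ ν := by
  have he := measurableEmbedding_inclProd (Y := Y) hS
  constructor
  · rw [Measure.map_add _ _ measurable_fst, Measure.map_smul,
      Measure.map_map measurable_fst he.measurable]
    change _ + μ S • π'.map (Subtype.val ∘ Prod.fst) = μ
    rw [← Measure.map_map measurable_subtype_coe measurable_fst, h'.1, Measure.map_smul,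
      smul_smul, ENNReal.mul_inv_cancel hm0 hm, one_smul, map_comap_subtype_coe hS, prod_univ, ← preimage_compl,
      ← Measure.restrict_map measurable_fst hS.compl, h.1, Measure.restrict_compl_add_restrict hS]
  · rw [Measure.map_add _ _ measurable_snd, Measure.map_smul,
      Measure.map_map measurable_snd he.measurable]
    change _ + μ S • π'.map Prod.snd = ν
    rw [h'.2, smul_smul, ENNReal.mul_inv_cancel hm0 hm, one_smul,
      ← Measure.map_add _ _ measurable_snd,
      Measure.restrict_compl_add_restrict (hS.prod MeasurableSet.univ), h.2]

variable {c : X → Y → ℝ}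

lemma IsOptimalPlan.glue (hπ : IsOptimalPlan c μ ν π) (hS : MeasurableSet S) (hm0 : μ S ≠ 0)
    (hm : μ S ≠ ∞) {π' : Measure (S × Y)}
    (hπ' : IsOptimalPlan (fun (x : S) y => c x y) ((μ S)⁻¹ • μ.comap Subtype.val)
      ((μ S)⁻¹ • (π.restrict (S ×ˢ univ)).map Prod.snd) π') :
    IsOptimalPlan c μ ν (π.restrict (S ×ˢ univ)ᶜ + μ S • π'.map (inclProd S Y)) := by
  have he := measurableEmbedding_inclProd (Y := Y) hS
  have hglue := isCoupling_glue hS hm0 hm hπ.1 hπ'.1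
  refine ⟨hglue, le_antisymm ?_ (transportCost_le hglue)⟩
  have hcost' := hπ'.2 ▸ transportCost_le (c := fun (x : S) y => c x y)
    (isCoupling_smul_comap_inclProd hS hπ.1)
  calc ∫⁻ p, ENNReal.ofReal (c p.1 p.2) ∂(π.restrict (S ×ˢ univ)ᶜ + μ S • π'.map (inclProd S Y))
      = ∫⁻ p in (S ×ˢ univ)ᶜ, ENNReal.ofReal (c p.1 p.2) ∂π
          + μ S * ∫⁻ q, ENNReal.ofReal (c q.1 q.2) ∂π' := by
        rw [lintegral_add_measure, lintegral_smul_measure, he.lintegral_map]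
        rfl
    _ ≤ ∫⁻ p in (S ×ˢ univ)ᶜ, ENNReal.ofReal (c p.1 p.2) ∂π
          + μ S * ∫⁻ q, ENNReal.ofReal (c q.1 q.2) ∂((μ S)⁻¹ • π.comap (inclProd S Y)) := by
        exact add_le_add le_rfl (mul_le_mul_right hcost' _)
    _ = ∫⁻ p in (S ×ˢ univ)ᶜ, ENNReal.ofReal (c p.1 p.2) ∂π
          + ∫⁻ p in S ×ˢ univ, ENNReal.ofReal (c p.1 p.2) ∂π := by
        rw [lintegral_smul_measure, smul_eq_mul, ← mul_assoc, ENNReal.mul_inv_cancel hm0 hm,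
          one_mul, ← map_inclProd_comap hS, he.lintegral_map]
        rfl
    _ = transportCost c μ ν := by
        rw [← lintegral_add_measure,
          Measure.restrict_compl_add_restrict (hS.prod MeasurableSet.univ), hπ.2]

lemma IsKantorovichPotential.restrict {f : X → EReal} (hf : IsKantorovichPotential c μ ν f)
    (hπ : IsOptimalPlan c μ ν π) (hS : MeasurableSet S) (hm0 : μ S ≠ 0) (hm : μ S ≠ ∞) :
    IsKantorovichPotential (fun (x : S) y => c x y) ((μ S)⁻¹ • μ.comap Subtype.val)
      ((μ S)⁻¹ • (π.restrict (S ×ˢ univ)).map Prod.snd) (fun x => f x) := by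
  obtain ⟨⟨⟨g, hg, rfl⟩, hftop, -⟩, hfae⟩ := hf
  refine ⟨⟨⟨g, hg, rfl⟩, fun x => hftop x, ?_⟩, fun π' hπ' => ?_⟩
  · have hSπ : π (S ×ˢ univ) ≠ 0 := hπ.1.measure_prod_univ hS ▸ hm0
    obtain ⟨p, hp, hpf⟩ :=
      Measure.exists_mem_of_measure_ne_zero_of_ae hSπ (ae_restrict_of_ae (hfae π hπ))
    obtain ⟨a, -, ha, -⟩ := EReal.exists_coe_of_add_eq_coe hpf
    exact ⟨⟨p.1, hp.1⟩, by simp [ha]⟩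
  · have hglue := hfae _ (hπ.glue hS hm0 hm hπ')
    have hπ'ae : ∀ᵐ q ∂π', cTransformY c g q.1 + cTransform c (cTransformY c g) q.2 =
        c q.1 q.2 :=
      (measurableEmbedding_inclProd hS).ae_map_iff.1 <|
        (Measure.ae_ennreal_smul_measure_iff hm0).1 <| ae_mono (Measure.le_add_left le_rfl) hglue
    exact hπ'ae.mono fun q hq => add_cTransform_subtype_eq hq

end Restriction

section Partition

variable {X ι : Type*} [MeasurableSpace X] [Countable ι] {μ : Measure X} {F : ι → Set X}

lemma ae_of_forall_measure_pos_ae_imp (hF : μ (⋃ i, F i)ᶜ = 0) {P : X → Prop}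
    (h : ∀ i, 0 < μ (F i) → ∀ᵐ x ∂μ, x ∈ F i → P x) : ∀ᵐ x ∂μ, P x := by
  have hpieces : ∀ᵐ x ∂μ, ∀ i, x ∈ F i → P x := by
    refine ae_all_iff.2 fun i => ?_
    rcases eq_zero_or_pos (μ (F i)) with h0 | hpos
    · exact (measure_eq_zero_iff_ae_notMem.1 h0).mono fun x hx hxF => absurd hxF hx
    · exact h i hpos
  filter_upwards [hpieces, measure_eq_zero_iff_ae_notMem.1 hF] with x hx hxF
  obtain ⟨i, hi⟩ := mem_iUnion.1 (not_notMem.1 hxF)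
  exact hx i hi

lemma exists_measure_pos_of_measure_compl_iUnion [NeZero μ] (hF : μ (⋃ i, F i)ᶜ = 0) :
    ∃ i, 0 < μ (F i) := by
  by_contra! h
  have hfalse : ∀ᵐ _ ∂μ, False :=
    ae_of_forall_measure_pos_ae_imp hF fun i hi => absurd hi (not_lt.2 (h i))
  exact NeZero.ne μ (ae_eq_bot.1 (eventually_false_iff_eq_bot.1 hfalse))

end Partition

section Degenerate

variable {X Y ι κ : Type*} [MeasurableSpace X] [MeasurableSpace Y] [Countable ι] [Countable κ]
  {μ : Measure X} {ν : Measure Y} {π : Measure (X × Y)} {F : ι → Set X} {G : κ → Set Y}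

lemma measure_prod_univ_eq_tsum {A : Set X} (hA : MeasurableSet A)
    (hGm : ∀ j, MeasurableSet (G j)) (hGd : Pairwise (Disjoint on G))
    (hnull : π (A ×ˢ (⋃ j, G j)ᶜ) = 0) {J : Set κ} (hJ : ∀ j ∉ J, π (A ×ˢ G j) = 0) :
    π (A ×ˢ univ) = ∑' j : J, π (A ×ˢ G j) :=
  calc π (A ×ˢ univ) = π (A ×ˢ (⋃ j, G j) ∪ A ×ˢ (⋃ j, G j)ᶜ) := by
        rw [← prod_union, union_compl_self]
    _ = π (A ×ˢ ⋃ j, G j) :=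
        measure_congr (union_ae_eq_left_of_ae_eq_empty (ae_eq_empty.2 hnull))
    _ = ∑' j, π (A ×ˢ G j) := by
        rw [prod_iUnion]
        exact measure_iUnion (fun j j' hjj' => (hGd hjj').set_prod_right A A)
          fun j => hA.prod (hGm j)
    _ = ∑' j : J, π (A ×ˢ G j) :=
        (tsum_subtype_eq_of_support_subset fun j hj => by_contra fun hjJ => hj (hJ j hjJ)).symm

lemma measure_univ_prod_eq_tsum {B : Set Y} (hB : MeasurableSet B)
    (hFm : ∀ i, MeasurableSet (F i)) (hFd : Pairwise (Disjoint on F))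
    (hnull : π ((⋃ i, F i)ᶜ ×ˢ B) = 0) {I : Set ι} (hI : ∀ i ∉ I, π (F i ×ˢ B) = 0) :
    π (univ ×ˢ B) = ∑' i : I, π (F i ×ˢ B) := by
  have hswap : ∀ s t, π.map MeasurableEquiv.prodComm (t ×ˢ s) = π (s ×ˢ t) := fun s t => by
    rw [MeasurableEquiv.map_apply]; exact congrArg π (preimage_swap_prod t s)
  simpa only [hswap] using measure_prod_univ_eq_tsum (π := π.map MeasurableEquiv.prodComm) hB
    hFm hFd (by rwa [hswap]) (J := I) (by simpa only [hswap] using hI)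

theorem isDegenerate_of_ne {α : Type*} [IsProbabilityMeasure μ] (hπ : IsCoupling π μ ν)
    (hFm : ∀ i, MeasurableSet (F i)) (hFd : Pairwise (Disjoint on F))
    (hFμ : μ (⋃ i, F i)ᶜ = 0) (hGm : ∀ j, MeasurableSet (G j))
    (hGd : Pairwise (Disjoint on G)) (hGν : ν (⋃ j, G j)ᶜ = 0) (a : ι → α)
    (hlink : ∀ i i' j, π (F i ×ˢ G j) ≠ 0 → π (F i' ×ˢ G j) ≠ 0 → a i = a i')
    {i₀ i₁ : ι} (hi₀ : 0 < μ (F i₀)) (hi₁ : 0 < μ (F i₁)) (hne : a i₀ ≠ a i₁) :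
    IsDegenerate F G μ ν π := by
  set I : Set ι := {i | a i = a i₀}
  set J : Set κ := {j | ∃ i ∈ I, π (F i ×ˢ G j) ≠ 0}
  have hrow : ∀ i ∈ I, μ (F i) = ∑' j : J, π (F i ×ˢ G j) := fun i hi => by
    rw [← hπ.measure_prod_univ (hFm i)]
    refine measure_prod_univ_eq_tsum (hFm i) hGm hGd ?_ fun j hj =>
      by_contra fun h => hj ⟨i, hi, h⟩
    exact measure_mono_null (prod_mono (subset_univ _) subset_rfl)
      (hπ.measure_univ_prod (MeasurableSet.iUnion hGm).compl ▸ hGν)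
  have hcol : ∀ j ∈ J, ν (G j) = ∑' i : I, π (F i ×ˢ G j) := by
    rintro j ⟨i', hi', hi'j⟩
    rw [← hπ.measure_univ_prod (hGm j)]
    refine measure_univ_prod_eq_tsum (hGm j) hFm hFd ?_ fun i hi =>
      by_contra fun h => hi ((hlink i i' j h hi'j).trans hi')
    exact measure_mono_null (prod_mono subset_rfl (subset_univ _))
      (hπ.measure_prod_univ (MeasurableSet.iUnion hFm).compl ▸ hFμ)
  have hIJ : ∑' i : I, μ (F i) = ∑' i : I, ∑' j : J, π (F i ×ˢ G j) :=
    tsum_congr fun i => hrow i i.2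
  have hJI : ∑' i : I, ∑' j : J, π (F i ×ˢ G j) = ∑' j : J, ν (G j) := by
    rw [ENNReal.tsum_comm]
    exact tsum_congr fun j => (hcol j j.2).symm
  refine ⟨I, J, hi₀.trans_le (ENNReal.le_tsum (⟨i₀, rfl⟩ : I)), hIJ, hJI, ?_⟩
  have hI₁ : (⋃ i : I, F i) ⊆ (F i₁)ᶜ :=
    iUnion_subset fun i => (hFd fun h => hne (h ▸ i.2).symm).subset_compl_right
  calc ∑' j : J, ν (G j) = μ (⋃ i : I, F i) := by
        rw [← hJI, ← hIJ]
        exact (measure_iUnion (f := fun i : I => F i)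
          (fun i i' h => hFd (Subtype.coe_injective.ne h)) fun i => hFm i).symm
    _ ≤ μ (F i₁)ᶜ := measure_mono hI₁
    _ = 1 - μ (F i₁) := prob_compl_eq_one_sub (hFm i₁)
    _ < 1 := ENNReal.sub_lt_self ENNReal.one_ne_top one_ne_zero hi₁.ne'

end Degenerate

lemma shift_eq_cTransform_sub_of_measure_ne_zero {X Y : Type*} [MeasurableSpace X]
    [MeasurableSpace Y] {c : X → Y → ℝ} {μ : Measure X} {ν : Measure Y} {π : Measure (X × Y)}
    {f₁ f₂ : X → EReal} (hπ : IsOptimalPlan c μ ν π) (hf₁ : IsKantorovichPotential c μ ν f₁)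
    (hf₂ : IsKantorovichPotential c μ ν f₂) {A : Set X} {a : EReal}
    (ha : ∀ᵐ x ∂μ, x ∈ A → f₁ x = f₂ x + a) {y : Y} (hAy : π (A ×ˢ {y}) ≠ 0) :
    a = cTransform c f₂ y - cTransform c f₁ y := by
  obtain ⟨p, ⟨hpA, hpy⟩, ⟨h₁, h₂⟩, hp⟩ := Measure.exists_mem_of_measure_ne_zero_of_ae hAy
    (ae_restrict_of_ae (((hf₁.2 π hπ).and (hf₂.2 π hπ)).and (hπ.1.ae_fst ha)))
  rw [mem_singleton_iff.1 hpy] at h₁ h₂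
  exact EReal.eq_sub_of_add_eq_coe h₁ h₂ (hp hpA)

lemma ae_imp_of_ae_smul_comap_subtype {X : Type*} [MeasurableSpace X] {μ : Measure X}
    {S : Set X} (hS : MeasurableSet S) {r : ℝ≥0∞} (hr : r ≠ 0) {P : X → Prop}
    (h : ∀ᵐ x : S ∂(r • μ.comap Subtype.val), P x) : ∀ᵐ x ∂μ, x ∈ S → P x :=
  (ae_restrict_iff' hS).1 <| (ae_restrict_iff_subtype hS).2 <|
    (Measure.ae_ennreal_smul_measure_iff hr).1 h

theorem stmt9_general {X Y : Type*}
    [TopologicalSpace X] [PolishSpace X] [MeasurableSpace X] [BorelSpace X]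
    [TopologicalSpace Y] [PolishSpace Y] [MeasurableSpace Y] [BorelSpace Y]
    {ι κ : Type*} [Countable ι] [Countable κ]
    (μ : Measure X) (ν : Measure Y) [IsProbabilityMeasure μ]
    (c : X → Y → ℝ)
    (F : ι → Set X) (G : κ → Set Y)
    (hF : IsComponentDecomp (msupport μ) F)
    (hG : IsComponentDecomp (msupport ν) G)
    (hsing : ∀ j : κ, 0 < ν (G j) → ∃ y : Y, G j = {y})
    (π : Measure (X × Y)) (hπopt : IsOptimalPlan c μ ν π)
    (hπnd : ¬ IsDegenerate F G μ ν π)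
    (huniq : ∀ i : ι, 0 < μ (F i) → ∀ f g : ↥(F i) → EReal,
      IsKantorovichPotential (fun (x : ↥(F i)) (y : Y) => c x.1 y)
        ((μ (F i))⁻¹ • Measure.comap Subtype.val μ)
        ((μ (F i))⁻¹ • Measure.map Prod.snd (π.restrict (F i ×ˢ Set.univ))) f →
      IsKantorovichPotential (fun (x : ↥(F i)) (y : Y) => c x.1 y)
        ((μ (F i))⁻¹ • Measure.comap Subtype.val μ)
        ((μ (F i))⁻¹ • Measure.map Prod.snd (π.restrict (F i ×ˢ Set.univ))) g →
      ∃ a : EReal, ∀ᵐ x ∂((μ (F i))⁻¹ • Measure.comap (Subtype.val : ↥(F i) → X) μ),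
        f x = g x + a)
    (f₁ f₂ : X → EReal)
    (hf₁ : IsKantorovichPotential c μ ν f₁)
    (hf₂ : IsKantorovichPotential c μ ν f₂) :
    ∃ a : EReal, ∀ᵐ x ∂μ, f₁ x = f₂ x + a := by
  have hconst : ∀ i, 0 < μ (F i) → ∃ a : EReal, ∀ᵐ x ∂μ, x ∈ F i → f₁ x = f₂ x + a := by
    intro i hi
    have hm := measure_ne_top μ (F i)
    obtain ⟨a, ha⟩ := huniq i hi _ _ (hf₁.restrict hπopt (hF.measurableSet i) hi.ne' hm)
      (hf₂.restrict hπopt (hF.measurableSet i) hi.ne' hm)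
    exact ⟨a, ae_imp_of_ae_smul_comap_subtype (hF.measurableSet i) (ENNReal.inv_ne_zero.2 hm) ha⟩
  choose! a ha using hconst
  have hlink : ∀ i i' j, π (F i ×ˢ G j) ≠ 0 → π (F i' ×ˢ G j) ≠ 0 → a i = a i' := by
    intro i i' j hij hi'j
    have hpos : ∀ k, π (F k ×ˢ G j) ≠ 0 → 0 < μ (F k) := fun k hk =>
      pos_iff_ne_zero.2 fun h0 => hk <| le_zero_iff.1 <|
        h0 ▸ hπopt.1.measure_prod_le_left (hF.measurableSet k) _
    obtain ⟨y, hy⟩ := hsing j <| pos_iff_ne_zero.2 fun h0 => hij <| le_zero_iff.1 <|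
      h0 ▸ hπopt.1.measure_prod_le_right _ (hG.measurableSet j)
    rw [shift_eq_cTransform_sub_of_measure_ne_zero hπopt hf₁ hf₂ (ha i (hpos i hij)) (hy ▸ hij),
      shift_eq_cTransform_sub_of_measure_ne_zero hπopt hf₁ hf₂ (ha i' (hpos i' hi'j)) (hy ▸ hi'j)]
  obtain ⟨i₀, hi₀⟩ := exists_measure_pos_of_measure_compl_iUnion hF.measure_compl_iUnion
  refine ⟨a i₀, ae_of_forall_measure_pos_ae_imp hF.measure_compl_iUnion fun i hi => ?_⟩
  have hai : a i = a i₀ := by_contra fun hne => hπnd <|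
    isDegenerate_of_ne hπopt.1 hF.measurableSet hF.2.1 hF.measure_compl_iUnion hG.measurableSet
      hG.2.1 hG.measure_compl_iUnion a hlink hi hi₀ hne
  exact hai ▸ ha i hi

/-- **Corollary, countable case 2: singleton components in Y.** -/
theorem stmt9 {X Y : Type*}
    [TopologicalSpace X] [PolishSpace X] [MeasurableSpace X] [BorelSpace X]
    [TopologicalSpace Y] [PolishSpace Y] [MeasurableSpace Y] [BorelSpace Y]
    {ι κ : Type*} [Countable ι] [Countable κ]
    (μ : Measure X) (ν : Measure Y) [IsProbabilityMeasure μ] [IsProbabilityMeasure ν]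
    (c : X → Y → ℝ) (hc0 : ∀ x y, 0 ≤ c x y)
    (hccont : Continuous fun p : X × Y => c p.1 p.2)
    (hT : transportCost c μ ν < ⊤)
    (F : ι → Set X) (G : κ → Set Y)
    (hF : IsComponentDecomp (msupport μ) F)
    (hG : IsComponentDecomp (msupport ν) G)
    (hsing : ∀ j : κ, 0 < ν (G j) → ∃ y : Y, G j = {y})
    (π : Measure (X × Y)) (hπopt : IsOptimalPlan c μ ν π)
    (hπnd : ¬ IsDegenerate F G μ ν π)
    (huniq : ∀ i : ι, 0 < μ (F i) → ∀ f g : ↥(F i) → EReal,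
      IsKantorovichPotential (fun (x : ↥(F i)) (y : Y) => c x.1 y)
        ((μ (F i))⁻¹ • Measure.comap Subtype.val μ)
        ((μ (F i))⁻¹ • Measure.map Prod.snd (π.restrict (F i ×ˢ Set.univ))) f →
      IsKantorovichPotential (fun (x : ↥(F i)) (y : Y) => c x.1 y)
        ((μ (F i))⁻¹ • Measure.comap Subtype.val μ)
        ((μ (F i))⁻¹ • Measure.map Prod.snd (π.restrict (F i ×ˢ Set.univ))) g →
      ∃ a : EReal, ∀ᵐ x ∂((μ (F i))⁻¹ • Measure.comap (Subtype.val : ↥(F i) → X) μ),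
        f x = g x + a)
    (f₁ f₂ : X → EReal)
    (hf₁ : IsKantorovichPotential c μ ν f₁)
    (hf₂ : IsKantorovichPotential c μ ν f₂) :
    ∃ a : EReal, ∀ᵐ x ∂μ, f₁ x = f₂ x + a :=
  stmt9_general μ ν c F G hF hG hsing π hπopt hπnd huniq f₁ f₂ hf₁ hf₂
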